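/- arXiv:1804.01381 — 2 statements merged into one kernel-verified Lean document; each statement's English description precedes it below -/
import Mathlib

section
/- Let I ⊆ K[y_1,...,y_m, x_1,...,x_n] be an ideal generated by polynomials g_1,...,g_s ∈ K[x_1,...,x_n] together with polynomials H_i = y_i − h_i where h_i ∈ K[x_1,...,x_n] for i = 1,...,m. Fix a monomial order on K[y,x] in which each y_i is greater than every monomial in K[x] and which restricts to a given monomial order on K[x]. If G ⊆ K[x_1,...,x_n] is a Gröbner basis of ⟨g_1,...,g_s⟩ ⊆ K[x], then G ∪ {H_1,...,H_m} is a Gröbner basis of I. -/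
/-!
If the leading monomial of `f ∈ I` contains some `yⱼ`, its leading term is divisible by
`yⱼ = LT(Hⱼ)`. Otherwise, since every `yⱼ` dominates all monomials in the `x`-variables, no
monomial of `f` contains a `y`, so `f ∈ K[x]`. The substitution `yᵢ ↦ hᵢ` kills every `Hᵢ` and
fixes `K[x]`, so it maps `I` into `⟨g⟩` and `f` to itself; hence `f ∈ ⟨g⟩`, and `LT(f)` lies in
`⟨LT(G)⟩` because leading terms commute with the inclusion `K[x] ⊆ K[y, x]`.
-/

open MvPolynomial
open scoped MonomialOrder

noncomputable def MonomialOrder.lexp {σ : Type*} (m : MonomialOrder σ) {K : Type*}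
    [CommSemiring K] (f : MvPolynomial σ K) : σ →₀ ℕ :=
  m.toSyn.symm (f.support.sup fun d => m.toSyn d)

noncomputable def MonomialOrder.leadTerm {σ : Type*} (m : MonomialOrder σ) {K : Type*}
    [CommSemiring K] (f : MvPolynomial σ K) : MvPolynomial σ K :=
  monomial (m.lexp f) (f.coeff (m.lexp f))

def MonomialOrder.IsGroebnerBasis {σ : Type*} (m : MonomialOrder σ) {K : Type*} [Field K]
    (I : Ideal (MvPolynomial σ K)) (G : Set (MvPolynomial σ K)) : Prop :=
  G ⊆ (I : Set (MvPolynomial σ K)) ∧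
    Ideal.span (m.leadTerm '' (I : Set (MvPolynomial σ K))) =
      Ideal.span (m.leadTerm '' G)

theorem Ideal.apply_mem_span_image_of_mem_span {R S F : Type*} [Semiring R] [Semiring S]
    [FunLike F R S] [RingHomClass F R S] (φ : F) {s : Set R} {x : R} (hx : x ∈ Ideal.span s) :
    φ x ∈ Ideal.span (φ '' s) :=
  Ideal.map_span φ s ▸ Ideal.mem_map_of_mem φ hx

namespace MonomialOrder

variable {σ τ : Type*} {R : Type*} [CommSemiring R]

theorem leadTerm_eq_leadingTerm (m : MonomialOrder σ) (f : MvPolynomial σ R) :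
    m.leadTerm f = m.leadingTerm f :=
  rfl

theorem degree_rename_of_monotone (m : MonomialOrder σ) (m' : MonomialOrder τ) {e : σ → τ}
    (he : Function.Injective e)
    (hmono : ∀ a b, a ≼[m] b → Finsupp.mapDomain e a ≼[m'] Finsupp.mapDomain e b)
    (f : MvPolynomial σ R) :
    m'.degree (rename e f) = Finsupp.mapDomain e (m.degree f) := by
  classical
  rcases eq_or_ne f 0 with rfl | hf
  · simp
  refine m'.toSyn.injective (le_antisymm ?_ ?_)
  · rw [degree_le_iff, support_rename_of_injective he]
    simp only [Finset.mem_image, forall_exists_index, and_imp, forall_apply_eq_imp_iff₂]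
    exact fun d hd => hmono _ _ (m.le_degree hd)
  · apply le_degree
    rw [support_rename_of_injective he]
    exact Finset.mem_image_of_mem _ (m.degree_mem_support hf)

theorem leadingTerm_rename_of_monotone (m : MonomialOrder σ) (m' : MonomialOrder τ)
    {e : σ → τ} (he : Function.Injective e)
    (hmono : ∀ a b, a ≼[m] b → Finsupp.mapDomain e a ≼[m'] Finsupp.mapDomain e b)
    (f : MvPolynomial σ R) :
    m'.leadingTerm (rename e f) = rename e (m.leadingTerm f) := by
  rw [leadingTerm, leadingTerm, leadingCoeff, leadingCoeff,
    degree_rename_of_monotone m m' he hmono, coeff_rename_mapDomain _ he, rename_monomial]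

theorem leadingTerm_X_sub_of_degree_lt {S : Type*} [CommRing S] [Nontrivial S]
    (m : MonomialOrder σ) {i : σ} {p : MvPolynomial σ S} (hp : m.degree p ≺[m] Finsupp.single i 1) :
    m.leadingTerm (X i - p) = X i := by
  rw [← degree_X (R := S) (m := m)] at hp
  rw [leadingTerm, degree_sub_of_lt hp, leadingCoeff_sub_of_lt hp, degree_X, leadingCoeff_X]
  rfl

theorem degree_rename_inr_apply_inl (m : MonomialOrder (σ ⊕ τ)) (p : MvPolynomial τ R) (j : σ) :
    m.degree (rename Sum.inr p) (Sum.inl j) = 0 := by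
  classical
  rcases eq_or_ne p 0 with rfl | hp
  · simp
  have hmem := m.degree_mem_support ((rename_injective _ Sum.inr_injective).ne hp)
  rw [support_rename_of_injective Sum.inr_injective, Finset.mem_image] at hmem
  obtain ⟨d, -, hd⟩ := hmem
  rw [← hd]
  exact Finsupp.mapDomain_of_notMem_range _ _ (by simp)

theorem exists_rename_inr_eq_of_degree_inl_eq_zero (m : MonomialOrder (σ ⊕ τ))
    (helim : ∀ (a : (σ ⊕ τ) →₀ ℕ) (i : σ), (∀ j, a (Sum.inl j) = 0) →
      a ≺[m] Finsupp.single (Sum.inl i) 1)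
    {f : MvPolynomial (σ ⊕ τ) R} (hf : ∀ j, m.degree f (Sum.inl j) = 0) :
    ∃ f' : MvPolynomial τ R, rename Sum.inr f' = f := by
  refine exists_rename_eq_of_vars_subset_range f _ Sum.inr_injective fun x hx => ?_
  obtain ⟨d, hd, hxd⟩ := (mem_vars_iff_mem_support x).mp hx
  rcases x with j | j
  · have hle : Finsupp.single (Sum.inl j) 1 ≤ d :=
      Finsupp.single_le_iff.mpr (Nat.one_le_iff_ne_zero.mpr (Finsupp.mem_support_iff.mp hxd))
    exact absurd ((m.toSyn_monotone hle).trans (m.le_degree hd)) (helim _ j hf).not_ge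
  · exact ⟨j, rfl⟩

theorem mem_span_of_rename_inr_mem_span {S : Type*} [CommRing S] {s : Set (MvPolynomial τ S)}
    (h : σ → MvPolynomial τ S) {f : MvPolynomial τ S}
    (hf : rename Sum.inr f ∈ Ideal.span (rename Sum.inr '' s ∪
      Set.range fun i => X (Sum.inl i) - rename Sum.inr (h i))) :
    f ∈ Ideal.span s := by
  set φ := aeval (R := S) (Sum.elim h X)
  have hφ : ∀ p, φ (rename Sum.inr p) = p := fun p => by
    rw [aeval_rename, Sum.elim_comp_inr, aeval_X_left_apply]
  have hspan : Ideal.span (rename Sum.inr '' s ∪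
      Set.range fun i => X (Sum.inl i) - rename Sum.inr (h i)) ≤ (Ideal.span s).comap φ := by
    rw [Ideal.span_le]
    rintro _ (⟨p, hp, rfl⟩ | ⟨i, rfl⟩)
    · simpa [hφ] using Ideal.subset_span hp
    · rw [SetLike.mem_coe, Ideal.mem_comap, map_sub, hφ, aeval_X, Sum.elim_inl, sub_self]
      exact zero_mem _
  simpa [hφ] using hspan hf

end MonomialOrder

/-- Lifting a Gröbner basis along intermediates (Theorem `Proposition Groebner Intermediates`,
first part, in algebraic form).  The big ring `K[y₁,…,y_q, x₁,…,xₙ]` is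
`MvPolynomial (Fin q ⊕ Fin n) K` with `yᵢ = X (Sum.inl i)`, `xⱼ = X (Sum.inr j)`, and `K[x]`
embeds via `rename Sum.inr`.  Let `I` be generated by `g₁,…,g_s ∈ K[x]` together with the
polynomials `Hᵢ = yᵢ − hᵢ`, `hᵢ ∈ K[x]`.  Assume the order `m̃` on `K[y,x]` makes every `yᵢ`
greater than each monomial in the `x`-variables and restricts to the order `m` on `K[x]`.
If `G ⊆ K[x]` is a Gröbner basis of `⟨g₁,…,g_s⟩` w.r.t. `m`, then
`G ∪ {H₁,…,H_q}` is a Gröbner basis of `I` w.r.t. `m̃`. -/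
theorem groebner_basis_lift_intermediates
    {q n s : ℕ} {K : Type*} [Field K]
    (m : MonomialOrder (Fin n)) (mt : MonomialOrder (Fin q ⊕ Fin n))
    (horder : ∀ (a : (Fin q ⊕ Fin n) →₀ ℕ) (i : Fin q),
      (∀ j : Fin q, a (Sum.inl j) = 0) →
        a ≺[mt] Finsupp.single (Sum.inl i : Fin q ⊕ Fin n) 1)
    (hrestrict : ∀ a b : Fin n →₀ ℕ,
      (a ≼[m] b) ↔
        (Finsupp.mapDomain Sum.inr a ≼[mt] Finsupp.mapDomain Sum.inr b))
    (g : Fin s → MvPolynomial (Fin n) K) (h : Fin q → MvPolynomial (Fin n) K)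
    (G : Set (MvPolynomial (Fin n) K))
    (hG : m.IsGroebnerBasis (Ideal.span (Set.range g)) G)
    (I : Ideal (MvPolynomial (Fin q ⊕ Fin n) K))
    (hI : I = Ideal.span
      ((Set.range fun i => rename (Sum.inr : Fin n → Fin q ⊕ Fin n) (g i)) ∪
        (Set.range fun i : Fin q =>
          X (Sum.inl i) - rename (Sum.inr : Fin n → Fin q ⊕ Fin n) (h i)))) :
    mt.IsGroebnerBasis I
      ((rename (Sum.inr : Fin n → Fin q ⊕ Fin n) '' G) ∪
        (Set.range fun i : Fin q =>
          X (Sum.inl i) - rename (Sum.inr : Fin n → Fin q ⊕ Fin n) (h i))) := by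
  subst hI
  set Hs := Set.range fun i : Fin q =>
    X (Sum.inl i) - rename (Sum.inr : Fin n → Fin q ⊕ Fin n) (h i)
  have hmono : ∀ a b, a ≼[m] b →
      Finsupp.mapDomain Sum.inr a ≼[mt] Finsupp.mapDomain Sum.inr b :=
    fun a b => (hrestrict a b).mp
  rw [Set.range_comp' (rename Sum.inr) g]
  have hB : rename Sum.inr '' G ∪ Hs ⊆ Ideal.span (rename Sum.inr '' Set.range g ∪ Hs) := by
    rintro _ (⟨p, hp, rfl⟩ | hp)
    · exact Ideal.span_mono Set.subset_union_left
        (Ideal.apply_mem_span_image_of_mem_span _ (hG.1 hp))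
    · exact Ideal.subset_span (Or.inr hp)
  refine ⟨hB, le_antisymm ?_ (Ideal.span_mono (Set.image_mono hB))⟩
  rw [Ideal.span_le]
  rintro _ ⟨f, hf, rfl⟩
  rw [MonomialOrder.leadTerm_eq_leadingTerm]
  by_cases hy : ∀ j, mt.degree f (Sum.inl j) = 0
  · obtain ⟨f, rfl⟩ := MonomialOrder.exists_rename_inr_eq_of_degree_inl_eq_zero mt horder hy
    have hf' : f ∈ Ideal.span (Set.range g) := MonomialOrder.mem_span_of_rename_inr_mem_span h hf
    have hlt : m.leadingTerm f ∈ Ideal.span (m.leadingTerm '' G) :=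
      hG.2 ▸ Ideal.subset_span ⟨f, hf', rfl⟩
    rw [MonomialOrder.leadingTerm_rename_of_monotone m mt Sum.inr_injective hmono]
    refine Ideal.span_mono ?_ (Ideal.apply_mem_span_image_of_mem_span (rename Sum.inr) hlt)
    rintro _ ⟨_, ⟨p, hp, rfl⟩, rfl⟩
    exact ⟨rename Sum.inr p, Or.inl ⟨p, hp, rfl⟩,
      MonomialOrder.leadingTerm_rename_of_monotone m mt Sum.inr_injective hmono p⟩
  · obtain ⟨j, hj⟩ := not_forall.mp hy
    refine Ideal.mem_of_dvd _ (X_dvd_monomial.mpr (Or.inr hj))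
      (Ideal.subset_span ⟨_, Or.inr ⟨j, rfl⟩, ?_⟩)
    exact MonomialOrder.leadingTerm_X_sub_of_degree_lt mt
      (horder _ j (MonomialOrder.degree_rename_inr_apply_inl mt (h j)))
end

section
/- Let I ⊆ K[y_1,...,y_m, x_1,...,x_n] be the ideal generated by polynomials g_1,...,g_s ∈ K[x] together with H_i = y_i − c_i · x^{a_i}, where c_i ∈ K and x^{a_i} is a monomial in x, for i = 1,...,m. Then I is a binomial ideal if and only if J = ⟨g_1,...,g_s⟩ ⊆ K[x] is a binomial ideal. -/
/-!
The substitution `yᵢ ↦ cᵢ x^{aᵢ}`, `xⱼ ↦ xⱼ` is a retraction of `K[y, x]` onto `K[x]` that kills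
every `Hᵢ`, so it maps `I` onto `J`. It sends monomials to terms, hence never increases the number
of terms of a polynomial, and binomial generators of `I` map to binomial generators of `J`.
Conversely `I = J·K[y, x] + ⟨H₁, …, H_q⟩` and each `Hᵢ` is a binomial.
-/

open MvPolynomial

/-- An ideal is binomial if it admits a generating set consisting of polynomials with at
most two terms. -/
def IsBinomialIdeal {σ : Type*} {K : Type*} [Field K] (I : Ideal (MvPolynomial σ K)) : Prop :=
  ∃ B : Set (MvPolynomial σ K), I = Ideal.span B ∧ ∀ f ∈ B, f.support.card ≤ 2

namespace MvPolynomial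

section Substitution

variable {σ τ R : Type*} [CommSemiring R] {f : σ → MvPolynomial τ R}

theorem exists_aeval_monomial_eq_monomial (hf : ∀ v, ∃ e k, f v = monomial e k)
    (d : σ →₀ ℕ) (r : R) : ∃ e k, aeval f (monomial d r) = monomial e k := by
  induction d using Finsupp.induction with
  | zero => exact ⟨0, r, by simp⟩
  | single_add v m d _ _ ih =>
    obtain ⟨e, k, he⟩ := ih
    obtain ⟨e', k', he'⟩ := hf v
    refine ⟨m • e' + e, k' ^ m * k, ?_⟩
    rw [monomial_single_add, map_mul, map_pow, he, aeval_X, he', monomial_pow, monomial_mul]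

theorem card_support_aeval_le (hf : ∀ v, ∃ e k, f v = monomial e k) (p : MvPolynomial σ R) :
    (aeval f p).support.card ≤ p.support.card := by
  classical
  conv_lhs => rw [p.as_sum, map_sum]
  calc (∑ d ∈ p.support, aeval f (monomial d (coeff d p))).support.card
      ≤ (p.support.biUnion fun d => (aeval f (monomial d (coeff d p))).support).card :=
        Finset.card_le_card support_sum
    _ ≤ ∑ d ∈ p.support, (aeval f (monomial d (coeff d p))).support.card :=
        Finset.card_biUnion_le
    _ ≤ ∑ _d ∈ p.support, 1 := by
        refine Finset.sum_le_sum fun d _ => ?_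
        obtain ⟨e, k, he⟩ := exists_aeval_monomial_eq_monomial hf d (coeff d p)
        rw [he]
        exact (Finset.card_le_card support_monomial_subset).trans (Finset.card_singleton e).le
    _ = p.support.card := by simp

end Substitution

theorem card_support_X_sub_monomial_le {σ R : Type*} [CommRing R] (v : σ) (d : σ →₀ ℕ) (r : R) :
    (X v - monomial d r).support.card ≤ 2 := by
  classical
  calc (X v - monomial d r).support.card ≤ ({Finsupp.single v 1, d} : Finset _).card := by
        refine Finset.card_le_card ((support_sub σ _ _).trans (Finset.union_subset ?_ ?_))
        · exact support_monomial_subset.trans (by simp)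
        · exact support_monomial_subset.trans (by simp)
    _ ≤ 2 := Finset.card_le_two

end MvPolynomial

section BinomialIdeal

variable {σ τ K : Type*} [Field K]

theorem IsBinomialIdeal.map_aeval {I : Ideal (MvPolynomial σ K)} (hI : IsBinomialIdeal I)
    {f : σ → MvPolynomial τ K} (hf : ∀ v, ∃ e k, f v = monomial e k) :
    IsBinomialIdeal (I.map (aeval f)) := by
  obtain ⟨B, rfl, hB⟩ := hI
  refine ⟨aeval f '' B, Ideal.map_span _ _, ?_⟩
  rintro - ⟨p, hp, rfl⟩
  exact (card_support_aeval_le hf p).trans (hB p hp)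

theorem IsBinomialIdeal.sup_span {I : Ideal (MvPolynomial σ K)} (hI : IsBinomialIdeal I)
    {H : Set (MvPolynomial σ K)} (hH : ∀ p ∈ H, p.support.card ≤ 2) :
    IsBinomialIdeal (I ⊔ Ideal.span H) := by
  obtain ⟨B, rfl, hB⟩ := hI
  refine ⟨B ∪ H, (Ideal.span_union B H).symm, ?_⟩
  rintro p (hp | hp)
  exacts [hB p hp, hH p hp]

theorem IsBinomialIdeal.map_rename {I : Ideal (MvPolynomial σ K)} (hI : IsBinomialIdeal I)
    (ρ : σ → τ) : IsBinomialIdeal (I.map (rename ρ)) := by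
  rw [rename_eq_aeval]
  exact hI.map_aeval fun v => ⟨Finsupp.single (ρ v) 1, 1, rfl⟩

end BinomialIdeal

theorem map_aeval_sumElim_span_rename_union {ι τ R : Type*} [CommRing R]
    (t : ι → MvPolynomial τ R) (S : Set (MvPolynomial τ R)) :
    (Ideal.span (rename Sum.inr '' S ∪
        Set.range fun i => X (Sum.inl i) - rename Sum.inr (t i))).map (aeval (Sum.elim t X)) =
      Ideal.span S := by
  have h_rename : ∀ p, aeval (Sum.elim t X) (rename Sum.inr p) = p := fun p => by
    rw [aeval_rename, Sum.elim_comp_inr, aeval_X_left_apply]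
  have h_kill : Ideal.span (aeval (Sum.elim t X) ''
      Set.range fun i => X (Sum.inl i) - rename Sum.inr (t i)) = ⊥ := by
    rw [Ideal.span_eq_bot]
    rintro - ⟨-, ⟨i, rfl⟩, rfl⟩
    rw [map_sub, h_rename, aeval_X, Sum.elim_inl, sub_self]
  rw [Ideal.map_span, Set.image_union, Ideal.span_union, Set.image_image]
  simp only [h_rename, Set.image_id', h_kill, sup_bot_eq]

/-- The 1-input intermediate case (Corollary on 1-input intermediates).  The big ring
`K[y₁,…,y_q,x₁,…,xₙ]` is `MvPolynomial (Fin q ⊕ Fin n) K` with `yᵢ = X (Sum.inl i)` and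
`xⱼ = X (Sum.inr j)`.  Let `I` be generated by `g₁,…,g_s ∈ K[x]` together with
`Hᵢ = yᵢ − cᵢ·x^{aᵢ}` where each `cᵢ·x^{aᵢ}` is a single term in the `x`-variables.
Then `I` is binomial iff `J = ⟨g₁,…,g_s⟩ ⊆ K[x]` is binomial. -/
theorem binomial_iff_core_binomial_one_input
    {q n s : ℕ} {K : Type*} [Field K]
    (g : Fin s → MvPolynomial (Fin n) K)
    (c : Fin q → K) (a : Fin q → (Fin n →₀ ℕ))
    (I : Ideal (MvPolynomial (Fin q ⊕ Fin n) K))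
    (hI : I = Ideal.span
      ((Set.range fun i => rename (Sum.inr : Fin n → Fin q ⊕ Fin n) (g i)) ∪
        (Set.range fun i : Fin q =>
          X (Sum.inl i) -
            monomial (Finsupp.mapDomain (Sum.inr : Fin n → Fin q ⊕ Fin n) (a i)) (c i)))) :
    IsBinomialIdeal I ↔ IsBinomialIdeal (Ideal.span (Set.range g)) := by
  set H : Fin q → MvPolynomial (Fin q ⊕ Fin n) K :=
    fun i => X (Sum.inl i) - rename Sum.inr (monomial (a i) (c i))
  have hI' : I = Ideal.span (rename Sum.inr '' Set.range g ∪ Set.range H) := by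
    simp only [hI, H, rename_monomial, Set.range_comp']
  constructor
  · intro h
    rw [← map_aeval_sumElim_span_rename_union (fun i => monomial (a i) (c i)), ← hI']
    refine h.map_aeval fun v => ?_
    cases v with
    | inl i => exact ⟨a i, c i, rfl⟩
    | inr j => exact ⟨Finsupp.single j 1, 1, rfl⟩
  · intro h
    rw [hI', Ideal.span_union, ← Ideal.map_span]
    refine (h.map_rename Sum.inr).sup_span ?_
    rintro - ⟨i, rfl⟩
    simp only [H, rename_monomial]
    exact card_support_X_sub_monomial_le _ _ _
end
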